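/- arXiv:0803.3565 — 2 statements merged into one kernel-verified Lean document; each statement's English description precedes it below -/
import Mathlib

section
/- For every sequence G = (G⁽ⁿ⁾)_{n≥0} with ‖L₀G‖_C < ∞ one has ‖L₂G‖_C ≤ (κ⁺ / m) ‖L₀G‖_C. In particular, for any δ > 0, if κ⁺ < δ m then ‖L₂G‖_C ≤ a ‖L₀G‖_C with a = κ⁺/m < δ. (Lemma 4.4: relative bound of the hopping part L₂ with respect to the diagonal part L₀.) -/
/-!
For each `n`, Tonelli in the moved coordinate and translation invariance of Lebesgue measure
show that every hopping term of `L₂G⁽ⁿ⁾` has the same `L¹` norm as `G⁽ⁿ⁾` (the kernel `a⁺`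
integrates to `1`), so `∫|L₂G⁽ⁿ⁾| ≤ κ⁺ n ∫|G⁽ⁿ⁾|`. Since the pair energy is nonnegative,
`|L₀G⁽ⁿ⁾| ≥ m n |G⁽ⁿ⁾|`. Comparing the two bounds term by term in the series defining `‖·‖_C`
gives the claim.
-/

open MeasureTheory ENNReal

/-- The pair interaction energy `Eₙ^a(x) = Σ_{i≠j} a(xᵢ - xⱼ)` (equal to `0` for `n ≤ 1`). -/
def pairEnergy (d : ℕ) (a : (Fin d → ℝ) → ℝ) (n : ℕ) (x : Fin n → (Fin d → ℝ)) : ℝ :=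
  ∑ i : Fin n, ∑ j : Fin n, if i ≠ j then a (x i - x j) else 0

/-- The norm of the Banach space `𝓛_C = L¹(Γ₀, C^{|η|}dλ(η))`. -/
noncomputable def normLC (d : ℕ) (C : ℝ) (G : (n : ℕ) → (Fin n → (Fin d → ℝ)) → ℝ) : ℝ≥0∞ :=
  ∑' n : ℕ, ENNReal.ofReal (C ^ n / n.factorial) *
    ∫⁻ x : Fin n → (Fin d → ℝ), ENNReal.ofReal |G n x|

/-- The diagonal operator `(L₀G)⁽ⁿ⁾(x) = -(mn + κ⁻Eₙ^{a⁻}(x))G⁽ⁿ⁾(x)`. -/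
def L0 (d : ℕ) (m κm : ℝ) (aminus : (Fin d → ℝ) → ℝ)
    (G : (n : ℕ) → (Fin n → (Fin d → ℝ)) → ℝ) :
    (n : ℕ) → (Fin n → (Fin d → ℝ)) → ℝ :=
  fun n x => -(m * n + κm * pairEnergy d aminus n x) * G n x

/-- The hopping part
`(L₂G)⁽ⁿ⁾(x₁,…,xₙ) = κ⁺ Σ_j ∫_{ℝ^d} a⁺(y-xⱼ) G⁽ⁿ⁾(x₁,…,x_{j-1},y,x_{j+1},…,xₙ) dy`. -/
noncomputable def L2 (d : ℕ) (κp : ℝ) (aplus : (Fin d → ℝ) → ℝ)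
    (G : (n : ℕ) → (Fin n → (Fin d → ℝ)) → ℝ) :
    (n : ℕ) → (Fin n → (Fin d → ℝ)) → ℝ :=
  fun n x =>
    κp * ∑ j : Fin n, ∫ y : Fin d → ℝ, aplus (y - x j) * G n (Function.update x j y)

section
variable {E : Type*} [MeasurableSpace E] (μ : Measure E) [SigmaFinite μ]

theorem lintegral_pi_eq_lintegral_lintegral_insertNth {k : ℕ}
    {F : (Fin (k + 1) → E) → ℝ≥0∞} (hF : Measurable F) (j : Fin (k + 1)) :
    ∫⁻ x, F x ∂Measure.pi (fun _ => μ) =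
      ∫⁻ r, ∫⁻ t, F (j.insertNth t r) ∂μ ∂Measure.pi (fun _ => μ) := by
  have e := measurePreserving_piFinSuccAbove (fun _ : Fin (k + 1) => μ) j
  rw [← e.symm.lintegral_comp hF]
  exact lintegral_prod_symm' _ (hF.comp (MeasurableEquiv.measurable _))

variable [AddGroup E] [MeasurableAdd₂ E] [MeasurableNeg E]
  [μ.IsAddLeftInvariant] [μ.IsNegInvariant]

theorem lintegral_lintegral_mul_update_eq {n : ℕ} {a : E → ℝ≥0∞} (ha : Measurable a)
    (ha_one : ∫⁻ z, a z ∂μ = 1) {g : (Fin n → E) → ℝ≥0∞} (hg : Measurable g) (j : Fin n) :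
    ∫⁻ x, ∫⁻ y, a (y - x j) * g (Function.update x j y) ∂μ ∂Measure.pi (fun _ => μ) =
      ∫⁻ x, g x ∂Measure.pi (fun _ => μ) := by
  obtain ⟨k, rfl⟩ : ∃ k, n = k + 1 := Nat.exists_eq_succ_of_ne_zero j.pos.ne'
  have hF : Measurable fun x : Fin (k + 1) → E =>
      ∫⁻ y, a (y - x j) * g (Function.update x j y) ∂μ := by
    fun_prop
  rw [lintegral_pi_eq_lintegral_lintegral_insertNth μ hF j,
    lintegral_pi_eq_lintegral_lintegral_insertNth μ hg j]
  refine lintegral_congr fun r => ?_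
  simp only [Fin.insertNth_apply_same, Fin.update_insertNth]
  have hgr : Measurable fun y => g (j.insertNth y r) :=
    hg.comp ((MeasurableEquiv.piFinSuccAbove (fun _ => E) j).symm.measurable.comp
      measurable_prodMk_right)
  rw [lintegral_lintegral_swap
    ((ha.comp (measurable_snd.sub measurable_fst)).mul (hgr.comp measurable_snd)).aemeasurable]
  refine lintegral_congr fun y => ?_
  rw [lintegral_mul_const _ (by fun_prop), lintegral_sub_left_eq_self, ha_one, one_mul]

end

theorem lintegral_enorm_eq_one {α : Type*} [MeasurableSpace α] {μ : Measure α} {a : α → ℝ}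
    (ha_nonneg : ∀ x, 0 ≤ a x) (ha_int : Integrable a μ) (ha_one : ∫ x, a x ∂μ = 1) :
    ∫⁻ x, ‖a x‖ₑ ∂μ = 1 := by
  rw [← ofReal_integral_norm_eq_lintegral_enorm ha_int]
  simp [Real.norm_of_nonneg (ha_nonneg _), ha_one]

theorem pairEnergy_nonneg {d : ℕ} {a : (Fin d → ℝ) → ℝ} (ha : ∀ x, 0 ≤ a x) (n : ℕ)
    (x : Fin n → (Fin d → ℝ)) : 0 ≤ pairEnergy d a n x :=
  Finset.sum_nonneg fun i _ => Finset.sum_nonneg fun j _ => by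
    split_ifs
    exacts [ha _, le_rfl]

theorem normLC_le_mul {d : ℕ} (C : ℝ) {F H : (n : ℕ) → (Fin n → (Fin d → ℝ)) → ℝ} (c : ℝ≥0∞)
    (hFH : ∀ n, ∫⁻ x, ‖F n x‖ₑ ≤ c * ∫⁻ x, ‖H n x‖ₑ) :
    normLC d C F ≤ c * normLC d C H := by
  simp only [normLC, ← Real.enorm_eq_ofReal_abs, ← ENNReal.tsum_mul_left]
  refine ENNReal.tsum_le_tsum fun n => ?_
  rw [mul_left_comm]
  gcongr
  exact hFH n

theorem enorm_L2_le {d : ℕ} (κp : ℝ) (a : (Fin d → ℝ) → ℝ)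
    (G : (n : ℕ) → (Fin n → (Fin d → ℝ)) → ℝ) (n : ℕ) (x : Fin n → (Fin d → ℝ)) :
    ‖L2 d κp a G n x‖ₑ ≤
      ‖κp‖ₑ * ∑ j, ∫⁻ y, ‖a (y - x j)‖ₑ * ‖G n (Function.update x j y)‖ₑ := by
  rw [L2, enorm_mul]
  gcongr
  refine (enorm_sum_le _ _).trans (Finset.sum_le_sum fun j _ => ?_)
  simpa only [enorm_mul] using
    enorm_integral_le_lintegral_enorm fun y => a (y - x j) * G n (Function.update x j y)

theorem lintegral_enorm_L2_le {d : ℕ} (κp : ℝ) {a : (Fin d → ℝ) → ℝ} (ha_meas : Measurable a)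
    (ha_one : ∫⁻ z, ‖a z‖ₑ = 1) {G : (n : ℕ) → (Fin n → (Fin d → ℝ)) → ℝ} (n : ℕ)
    (hG : Measurable (G n)) :
    ∫⁻ x, ‖L2 d κp a G n x‖ₑ ≤ ‖κp‖ₑ * n * ∫⁻ x, ‖G n x‖ₑ := by
  calc ∫⁻ x, ‖L2 d κp a G n x‖ₑ
      ≤ ∫⁻ x, ‖κp‖ₑ * ∑ j, ∫⁻ y, ‖a (y - x j)‖ₑ * ‖G n (Function.update x j y)‖ₑ :=
        lintegral_mono (enorm_L2_le κp a G n)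
    _ = ‖κp‖ₑ * ∑ j : Fin n, ∫⁻ x, ‖G n x‖ₑ := by
        rw [lintegral_const_mul _ (by fun_prop), lintegral_finsetSum _ (fun j _ => by fun_prop)]
        congr 1
        refine Finset.sum_congr rfl fun j _ => ?_
        exact lintegral_lintegral_mul_update_eq volume ha_meas.enorm ha_one hG.enorm j
    _ = ‖κp‖ₑ * n * ∫⁻ x, ‖G n x‖ₑ := by
        rw [Finset.sum_const, Finset.card_univ, Fintype.card_fin, nsmul_eq_mul, mul_assoc]

theorem mul_lintegral_enorm_le_lintegral_enorm_L0 {d : ℕ} (m : ℝ) {κm : ℝ} (hκm : 0 ≤ κm)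
    {a : (Fin d → ℝ) → ℝ} (ha : ∀ x, 0 ≤ a x) (G : (n : ℕ) → (Fin n → (Fin d → ℝ)) → ℝ)
    (n : ℕ) :
    ENNReal.ofReal (m * n) * ∫⁻ x, ‖G n x‖ₑ ≤ ∫⁻ x, ‖L0 d m κm a G n x‖ₑ := by
  rw [← lintegral_const_mul' _ _ ofReal_ne_top]
  refine lintegral_mono fun x => ?_
  have hE := mul_nonneg hκm (pairEnergy_nonneg ha n x)
  simp only [L0, Real.enorm_eq_ofReal_abs, ← ENNReal.ofReal_mul' (abs_nonneg _), abs_mul]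
  gcongr
  rw [abs_neg]
  exact (le_add_of_nonneg_right hE).trans (le_abs_self _)

theorem stmt4_general (d : ℕ)
    (aminus aplus : (Fin d → ℝ) → ℝ)
    (ham_nonneg : ∀ x, 0 ≤ aminus x)
    (hap_nonneg : ∀ x, 0 ≤ aplus x)
    (hap_meas : Measurable aplus) (hap_int : Integrable aplus)
    (hap_norm : ∫ x, aplus x = 1)
    (m κm κp C : ℝ) (hm : 0 < m) (hκm : 0 < κm) (hκp : 0 < κp)
    (G : (n : ℕ) → (Fin n → (Fin d → ℝ)) → ℝ) (hGmeas : ∀ n, Measurable (G n)) :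
    normLC d C (L2 d κp aplus G)
        ≤ ENNReal.ofReal (κp / m) * normLC d C (L0 d m κm aminus G) ∧
      ∀ δ : ℝ, 0 < δ → κp < δ * m → κp / m < δ := by
  refine ⟨normLC_le_mul C _ fun n => ?_, fun δ _ hκp_lt => (div_lt_iff₀ hm).2 hκp_lt⟩
  calc ∫⁻ x, ‖L2 d κp aplus G n x‖ₑ
      ≤ ‖κp‖ₑ * n * ∫⁻ x, ‖G n x‖ₑ :=
        lintegral_enorm_L2_le κp hap_meas
          (lintegral_enorm_eq_one hap_nonneg hap_int hap_norm) n (hGmeas n)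
    _ = ENNReal.ofReal (κp / m) * (ENNReal.ofReal (m * n) * ∫⁻ x, ‖G n x‖ₑ) := by
        rw [← mul_assoc, ← ENNReal.ofReal_mul (by positivity), ← mul_assoc,
          div_mul_cancel₀ _ hm.ne', ENNReal.ofReal_mul hκp.le, ENNReal.ofReal_natCast,
          Real.enorm_of_nonneg hκp.le]
    _ ≤ ENNReal.ofReal (κp / m) * ∫⁻ x, ‖L0 d m κm aminus G n x‖ₑ := by
        gcongr
        exact mul_lintegral_enorm_le_lintegral_enorm_L0 m hκm.le ham_nonneg G n

/-- Lemma 4.4: the relative bound `‖L₂G‖_C ≤ (κ⁺/m)‖L₀G‖_C`; in particular, for any `δ > 0`,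
if `κ⁺ < δm` then `‖L₂G‖_C ≤ a‖L₀G‖_C` with `a = κ⁺/m < δ`. -/
theorem stmt4 (d : ℕ) (hd : 1 ≤ d)
    (aminus aplus : (Fin d → ℝ) → ℝ)
    (ham_nonneg : ∀ x, 0 ≤ aminus x) (ham_even : ∀ x, aminus (-x) = aminus x)
    (ham_meas : Measurable aminus) (ham_int : Integrable aminus)
    (ham_norm : ∫ x, aminus x = 1)
    (hap_nonneg : ∀ x, 0 ≤ aplus x) (hap_even : ∀ x, aplus (-x) = aplus x)
    (hap_meas : Measurable aplus) (hap_int : Integrable aplus)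
    (hap_norm : ∫ x, aplus x = 1)
    (m κm κp C : ℝ) (hm : 0 < m) (hκm : 0 < κm) (hκp : 0 < κp) (hC : 0 < C)
    (G : (n : ℕ) → (Fin n → (Fin d → ℝ)) → ℝ) (hGmeas : ∀ n, Measurable (G n))
    (hG : normLC d C (L0 d m κm aminus G) < ⊤) :
    normLC d C (L2 d κp aplus G)
        ≤ ENNReal.ofReal (κp / m) * normLC d C (L0 d m κm aminus G) ∧
      ∀ δ : ℝ, 0 < δ → κp < δ * m → κp / m < δ :=
  stmt4_general d aminus aplus ham_nonneg hap_nonneg hap_meas hap_int hap_norm m κm κp C hm hκm hκp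
    G hGmeas
end

section
/- Assume C κ⁻ a⁻(x) ≥ 2 κ⁺ a⁺(x) for all x ∈ ℝ^d and m > 2(κ⁻ C + κ⁺). Then for every sequence G = (G⁽ⁿ⁾)_{n≥0} with each G⁽ⁿ⁾ symmetric under permutations of its arguments and ‖L₀G‖_C < ∞, one has ‖L₁G + L₂G + L₃G‖_C ≤ a ‖L₀G‖_C with a := κ⁻C/m + κ⁺/m + 1/2, and a < 1. (The key relative bound in the proof of Theorem 4.6, which yields that L̂ = L₀ + L₁ + L₂ + L₃ generates a holomorphic semigroup on 𝓛_C.) -/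
/-!
Each operator is compared with `L₀` level by level in the weighted `L¹` norm. Integrating out
one variable against a normalised kernel gives `‖(L₁G)⁽ⁿ⁺¹⁾‖₁ ≤ κ⁻ (n+1) n ‖G⁽ⁿ⁾‖₁` and
`‖(L₂G)⁽ⁿ⁾‖₁ ≤ κ⁺ n ‖G⁽ⁿ⁾‖₁`, both absorbed by the `m n` part of `L₀`; the shift of level in
`L₁` trades the factor `n+1` for `C` in the weights `Cⁿ/n!`. For `L₃`, the condition
`2κ⁺a⁺ ≤ Cκ⁻a⁻` bounds the birth term by the interaction of the newborn particle with the
others. Since `G⁽ⁿ⁺¹⁾` is symmetric, every particle carries the same share of `E_{n+1}^{a⁻}`, so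
this interaction is a `1/(n+1)` part of the `κ⁻E` term of `L₀` at level `n+1`, and the weight
shift leaves the factor `1/2`.
-/

open MeasureTheory ENNReal

/-- The off-diagonal competition part `L₁` (`0` for `n ≤ 1`). -/
def L1 (d : ℕ) (κm : ℝ) (aminus : (Fin d → ℝ) → ℝ)
    (G : (n : ℕ) → (Fin n → (Fin d → ℝ)) → ℝ) :
    (n : ℕ) → (Fin n → (Fin d → ℝ)) → ℝ
  | 0 => fun _ => 0
  | 1 => fun _ => 0
  | (k + 2) => fun x =>
      κm * ∑ j : Fin (k + 2), ∑ i : Fin (k + 2),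
        if i ≠ j then aminus (x i - x j) * G (k + 1) (x ∘ j.succAbove) else 0

/-- The birth part `L₃`. -/
noncomputable def L3 (d : ℕ) (κp : ℝ) (aplus : (Fin d → ℝ) → ℝ)
    (G : (n : ℕ) → (Fin n → (Fin d → ℝ)) → ℝ) :
    (n : ℕ) → (Fin n → (Fin d → ℝ)) → ℝ :=
  fun n x =>
    κp * ∑ j : Fin n, ∫ y : Fin d → ℝ, aplus (y - x j) * G (n + 1) (Fin.snoc x y)

/-- `G = (G⁽ⁿ⁾)` has components symmetric under permutations of the arguments. -/
def IsSymmSeq (d : ℕ) (G : (n : ℕ) → (Fin n → (Fin d → ℝ)) → ℝ) : Prop :=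
  ∀ (n : ℕ) (σ : Equiv.Perm (Fin n)) (x : Fin n → (Fin d → ℝ)), G n (x ∘ σ) = G n x

theorem Fin.sum_univ_erase_last {M : Type*} [AddCommMonoid M] {n : ℕ} (g : Fin (n + 1) → M) :
    ∑ j ∈ Finset.univ.erase (Fin.last n), g j = ∑ j : Fin n, g j.castSucc := by
  rw [Fin.univ_castSuccEmb, Finset.erase_cons, Finset.sum_map]
  rfl

theorem measurable_insertNth {E : Type*} [MeasurableSpace E] {n : ℕ} (j : Fin (n + 1)) :
    Measurable fun p : E × (Fin n → E) => (j.insertNth p.1 p.2 : Fin (n + 1) → E) :=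
  (MeasurableEquiv.piFinSuccAbove (fun _ => E) j).symm.measurable

theorem measurable_snoc {E : Type*} [MeasurableSpace E] {n : ℕ} :
    Measurable fun p : (Fin n → E) × E => (Fin.snoc p.1 p.2 : Fin (n + 1) → E) := by
  simp_rw [← Fin.insertNth_last']
  exact (measurable_insertNth (Fin.last n)).comp measurable_swap

theorem enorm_mul_sum_integral_le {α ι : Type*} [MeasurableSpace α] {μ : Measure α}
    (s : Finset ι) (κ : ℝ) (F : ι → α → ℝ) :
    ‖κ * ∑ j ∈ s, ∫ y, F j y ∂μ‖ₑ ≤ ‖κ‖ₑ * ∑ j ∈ s, ∫⁻ y, ‖F j y‖ₑ ∂μ := by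
  rw [enorm_mul]
  gcongr
  exact (enorm_sum_le _ _).trans
    (Finset.sum_le_sum fun j _ => enorm_integral_le_lintegral_enorm _)

theorem lintegral_enorm_sub_left_eq_one {E : Type*} [MeasureSpace E] [AddGroup E]
    [MeasurableAdd E] [MeasurableNeg E] [(volume : Measure E).IsAddLeftInvariant]
    [(volume : Measure E).IsNegInvariant] {a : E → ℝ} (ha : ∀ x, 0 ≤ a x)
    (hi : Integrable a) (h1 : ∫ x, a x = 1) (y : E) :
    ∫⁻ t, ‖a (y - t)‖ₑ = 1 := by
  rw [lintegral_sub_left_eq_self (fun x => ‖a x‖ₑ) y,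
    ← ofReal_integral_norm_eq_lintegral_enorm hi]
  simp [Real.norm_of_nonneg (ha _), h1]

section PiIntegrals

variable {E : Type*} [MeasureSpace E] [SigmaFinite (volume : Measure E)] {n : ℕ}

theorem lintegral_comp_perm (σ : Equiv.Perm (Fin n)) (f : (Fin n → E) → ℝ≥0∞) :
    ∫⁻ x, f (x ∘ σ) = ∫⁻ x, f x :=
  (volume_preserving_arrowCongr' σ.symm (MeasurableEquiv.refl E)
    (MeasurePreserving.id volume)).lintegral_comp_emb (MeasurableEquiv.measurableEmbedding _) f

theorem lintegral_eq_lintegral_insertNth (j : Fin (n + 1)) {f : (Fin (n + 1) → E) → ℝ≥0∞}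
    (hf : Measurable f) :
    ∫⁻ x, f x = ∫⁻ r : Fin n → E, ∫⁻ t, f (j.insertNth t r) := by
  have h := (volume_preserving_piFinSuccAbove (fun _ : Fin (n + 1) => E) j).symm
  rw [← h.lintegral_comp hf, Measure.volume_eq_prod]
  exact lintegral_prod_symm _ (hf.comp h.measurable).aemeasurable

theorem lintegral_lintegral_snoc {f : (Fin (n + 1) → E) → ℝ≥0∞} (hf : Measurable f) :
    ∫⁻ x : Fin n → E, ∫⁻ y, f (Fin.snoc x y) = ∫⁻ z, f z := by
  simp_rw [lintegral_eq_lintegral_insertNth (Fin.last n) hf, Fin.insertNth_last']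

theorem lintegral_row_mul_eq_of_comp_perm [Sub E] {f : (Fin n → E) → ℝ≥0∞}
    (hf : ∀ (σ : Equiv.Perm (Fin n)) x, f (x ∘ σ) = f x) (k : E → ℝ≥0∞) (i i' : Fin n) :
    ∫⁻ z, (∑ j ∈ Finset.univ.erase i, k (z i - z j)) * f z
      = ∫⁻ z, (∑ j ∈ Finset.univ.erase i', k (z i' - z j)) * f z := by
  rw [← lintegral_comp_perm (Equiv.swap i i')]
  refine lintegral_congr fun z => ?_
  rw [hf]
  congr 1
  exact Finset.sum_equiv (Equiv.swap i i') (by simp [Equiv.swap_apply_eq_iff]) (by simp)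

variable [Sub E] [MeasurableSub₂ E] {k : E → ℝ≥0∞}

theorem lintegral_sum_rows_mul_of_comp_perm (hk : Measurable k) {f : (Fin n → E) → ℝ≥0∞}
    (hf : Measurable f) (hsymm : ∀ (σ : Equiv.Perm (Fin n)) x, f (x ∘ σ) = f x) (i₀ : Fin n) :
    ∫⁻ z, (∑ i, ∑ j ∈ Finset.univ.erase i, k (z i - z j)) * f z
      = n * ∫⁻ z, (∑ j ∈ Finset.univ.erase i₀, k (z i₀ - z j)) * f z := by
  simp_rw [Finset.sum_mul (s := Finset.univ)]
  rw [lintegral_finsetSum _ fun i _ => by fun_prop]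
  simp_rw [lintegral_row_mul_eq_of_comp_perm hsymm k _ i₀]
  rw [Finset.sum_const, Finset.card_univ, Fintype.card_fin, nsmul_eq_mul]

theorem lintegral_kernel_mul_comp_succAbove (hk : Measurable k)
    (hk1 : ∀ y, ∫⁻ t, k (y - t) = 1) {f : (Fin n → E) → ℝ≥0∞} (hf : Measurable f)
    {i j : Fin (n + 1)} (hij : i ≠ j) :
    ∫⁻ x, k (x i - x j) * f (x ∘ j.succAbove) = ∫⁻ x, f x := by
  obtain ⟨i, rfl⟩ := Fin.exists_succAbove_eq hij
  rw [lintegral_eq_lintegral_insertNth j (by fun_prop)]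
  refine lintegral_congr fun r => ?_
  simp only [Fin.insertNth_apply_succAbove, Fin.insertNth_apply_same,
    Fin.insertNth_comp_succAbove]
  rw [lintegral_mul_const _ (by fun_prop), hk1, one_mul]

theorem lintegral_lintegral_kernel_mul_update (hk : Measurable k)
    (hk1 : ∀ y, ∫⁻ t, k (y - t) = 1) {f : (Fin (n + 1) → E) → ℝ≥0∞} (hf : Measurable f)
    (j : Fin (n + 1)) :
    ∫⁻ x, ∫⁻ y, k (y - x j) * f (Function.update x j y) = ∫⁻ x, f x := by
  have hupdate := measurable_update' (a := j) (X := fun _ => E)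
  have hmeas : Measurable fun p : (Fin (n + 1) → E) × E =>
      k (p.2 - p.1 j) * f (Function.update p.1 j p.2) := by fun_prop
  rw [lintegral_eq_lintegral_insertNth j hmeas.lintegral_prod_right',
    lintegral_eq_lintegral_insertNth j hf]
  refine lintegral_congr fun r => ?_
  simp only [Fin.insertNth_apply_same, Fin.update_insertNth]
  have hinsert : Measurable fun y : E => (j.insertNth y r : Fin (n + 1) → E) :=
    (measurable_insertNth j).comp measurable_prodMk_right
  rw [lintegral_lintegral_swap (by fun_prop)]
  refine lintegral_congr fun y => ?_
  rw [lintegral_mul_const _ (by fun_prop), hk1, one_mul]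

end PiIntegrals

section Operators

variable {d : ℕ} {G : (n : ℕ) → (Fin n → (Fin d → ℝ)) → ℝ} {n : ℕ}

theorem pairEnergy_eq_sum_erase (a : (Fin d → ℝ) → ℝ) (x : Fin n → Fin d → ℝ) :
    pairEnergy d a n x = ∑ i, ∑ j ∈ Finset.univ.erase i, a (x i - x j) := by
  simp only [pairEnergy, ← Finset.sum_filter, Finset.filter_ne]

theorem ofReal_pairEnergy {a : (Fin d → ℝ) → ℝ} (ha : ∀ x, 0 ≤ a x) (x : Fin n → Fin d → ℝ) :
    ENNReal.ofReal (pairEnergy d a n x)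
      = ∑ i, ∑ j ∈ Finset.univ.erase i, ‖a (x i - x j)‖ₑ := by
  rw [pairEnergy_eq_sum_erase,
    ENNReal.ofReal_sum_of_nonneg fun i _ => Finset.sum_nonneg fun j _ => ha _]
  simp_rw [ENNReal.ofReal_sum_of_nonneg fun j _ => ha _, Real.enorm_eq_ofReal (ha _)]

theorem enorm_L0 {m κm : ℝ} (hm : 0 ≤ m) (hκm : 0 ≤ κm) {a : (Fin d → ℝ) → ℝ}
    (ha : ∀ x, 0 ≤ a x) (x : Fin n → Fin d → ℝ) :
    ‖L0 d m κm a G n x‖ₑ = (ENNReal.ofReal m * n +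
      ENNReal.ofReal κm * ∑ i, ∑ j ∈ Finset.univ.erase i, ‖a (x i - x j)‖ₑ) * ‖G n x‖ₑ := by
  have hE : 0 ≤ pairEnergy d a n x := by
    rw [pairEnergy_eq_sum_erase]
    exact Finset.sum_nonneg fun i _ => Finset.sum_nonneg fun j _ => ha _
  rw [L0, enorm_mul, enorm_neg, Real.enorm_eq_ofReal (by positivity),
    ENNReal.ofReal_add (by positivity) (by positivity), ENNReal.ofReal_mul hm,
    ENNReal.ofReal_mul hκm, ofReal_pairEnergy ha, ENNReal.ofReal_natCast]

theorem mul_lintegral_le_lintegral_L0 {m κm : ℝ} (hm : 0 ≤ m) (hκm : 0 ≤ κm)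
    {a : (Fin d → ℝ) → ℝ} (ha : ∀ x, 0 ≤ a x) (n : ℕ) :
    ENNReal.ofReal m * n * ∫⁻ x, ‖G n x‖ₑ ≤ ∫⁻ x, ‖L0 d m κm a G n x‖ₑ :=
  (lintegral_const_mul_le _ _).trans <| lintegral_mono fun x => by
    rw [enorm_L0 hm hκm ha]
    gcongr
    exact le_self_add

theorem mul_lintegral_lastRow_le_lintegral_L0 {m κm : ℝ} (hm : 0 ≤ m) (hκm : 0 ≤ κm)
    {a : (Fin d → ℝ) → ℝ} (ha : ∀ x, 0 ≤ a x) (ha_meas : Measurable a)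
    (hG : Measurable (G (n + 1)))
    (hsymm : ∀ (σ : Equiv.Perm (Fin (n + 1))) x, G (n + 1) (x ∘ σ) = G (n + 1) x) :
    ENNReal.ofReal κm * ((n + 1) *
      ∫⁻ z, (∑ j : Fin n, ‖a (z (Fin.last n) - z j.castSucc)‖ₑ) * ‖G (n + 1) z‖ₑ)
      ≤ ∫⁻ x, ‖L0 d m κm a G (n + 1) x‖ₑ := by
  have hrows := lintegral_sum_rows_mul_of_comp_perm (k := fun x => ‖a x‖ₑ) (by fun_prop)
    (f := fun z => ‖G (n + 1) z‖ₑ) (by fun_prop) (fun σ x => by rw [hsymm]) (Fin.last n)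
  simp only [Fin.sum_univ_erase_last, Nat.cast_add, Nat.cast_one] at hrows
  rw [← hrows, ← lintegral_const_mul _ (by fun_prop)]
  refine lintegral_mono fun x => ?_
  rw [enorm_L0 hm hκm ha, ← mul_assoc]
  gcongr
  exact le_add_self

theorem L1_succ (κm : ℝ) (a : (Fin d → ℝ) → ℝ) (x : Fin (n + 1) → Fin d → ℝ) :
    L1 d κm a G (n + 1) x =
      κm * ∑ j, ∑ i ∈ Finset.univ.erase j, a (x i - x j) * G n (x ∘ j.succAbove) := by
  rcases n with _ | n
  · simp [L1]
  · simp only [L1, ← Finset.sum_filter, Finset.filter_ne']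

theorem lintegral_L1_succ_le (κm : ℝ) {a : (Fin d → ℝ) → ℝ} (ha_meas : Measurable a)
    (ha1 : ∀ y, ∫⁻ t, ‖a (y - t)‖ₑ = 1) (hG : Measurable (G n)) :
    ∫⁻ x, ‖L1 d κm a G (n + 1) x‖ₑ ≤ ‖κm‖ₑ * ((n + 1) * n) * ∫⁻ x, ‖G n x‖ₑ := by
  have hpt : ∀ x, ‖L1 d κm a G (n + 1) x‖ₑ ≤ ‖κm‖ₑ * ∑ j : Fin (n + 1),
      ∑ i ∈ Finset.univ.erase j, ‖a (x i - x j)‖ₑ * ‖G n (x ∘ j.succAbove)‖ₑ := fun x => by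
    rw [L1_succ, enorm_mul]
    gcongr
    refine (enorm_sum_le _ _).trans (Finset.sum_le_sum fun j _ => ?_)
    exact (enorm_sum_le _ _).trans_eq (by simp only [enorm_mul])
  calc ∫⁻ x, ‖L1 d κm a G (n + 1) x‖ₑ
      ≤ ∫⁻ x, ‖κm‖ₑ * ∑ j : Fin (n + 1), ∑ i ∈ Finset.univ.erase j,
          ‖a (x i - x j)‖ₑ * ‖G n (x ∘ j.succAbove)‖ₑ := lintegral_mono hpt
    _ = ‖κm‖ₑ * ∑ j : Fin (n + 1), ∑ i ∈ Finset.univ.erase j, ∫⁻ x, ‖G n x‖ₑ := by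
        rw [lintegral_const_mul' _ _ enorm_ne_top, lintegral_finsetSum _ fun j _ => by fun_prop]
        refine congrArg _ (Finset.sum_congr rfl fun j _ => ?_)
        rw [lintegral_finsetSum _ fun i _ => by fun_prop]
        refine Finset.sum_congr rfl fun i hi => ?_
        exact lintegral_kernel_mul_comp_succAbove ha_meas.enorm ha1 hG.enorm
          (Finset.ne_of_mem_erase hi)
    _ = ‖κm‖ₑ * ((n + 1) * n) * ∫⁻ x, ‖G n x‖ₑ := by
        simp only [Finset.sum_const, Finset.card_erase_of_mem (Finset.mem_univ _),
          Finset.card_univ, Fintype.card_fin, nsmul_eq_mul, add_tsub_cancel_right]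
        push_cast
        ring

theorem lintegral_L2_le (κp : ℝ) {a : (Fin d → ℝ) → ℝ} (ha_meas : Measurable a)
    (ha1 : ∀ y, ∫⁻ t, ‖a (y - t)‖ₑ = 1) (hG : Measurable (G n)) :
    ∫⁻ x, ‖L2 d κp a G n x‖ₑ ≤ ‖κp‖ₑ * n * ∫⁻ x, ‖G n x‖ₑ := by
  rcases n with _ | n
  · simp [L2]
  have hmeas : ∀ j : Fin (n + 1), Measurable fun p : (Fin (n + 1) → Fin d → ℝ) × (Fin d → ℝ) =>
      ‖a (p.2 - p.1 j)‖ₑ * ‖G (n + 1) (Function.update p.1 j p.2)‖ₑ := fun j => by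
    have hupdate := measurable_update' (a := j) (X := fun _ => Fin d → ℝ)
    fun_prop
  calc ∫⁻ x, ‖L2 d κp a G (n + 1) x‖ₑ
      ≤ ∫⁻ x, ‖κp‖ₑ * ∑ j, ∫⁻ y, ‖a (y - x j)‖ₑ * ‖G (n + 1) (Function.update x j y)‖ₑ :=
        lintegral_mono fun x =>
          (enorm_mul_sum_integral_le _ κp _).trans_eq (by simp only [enorm_mul])
    _ = ‖κp‖ₑ * ∑ _j : Fin (n + 1), ∫⁻ x, ‖G (n + 1) x‖ₑ := by
        rw [lintegral_const_mul' _ _ enorm_ne_top,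
          lintegral_finsetSum _ fun j _ => (hmeas j).lintegral_prod_right']
        simp_rw [lintegral_lintegral_kernel_mul_update ha_meas.enorm ha1 hG.enorm]
    _ = ‖κp‖ₑ * ↑(n + 1) * ∫⁻ x, ‖G (n + 1) x‖ₑ := by
        rw [Finset.sum_const, Finset.card_univ, Fintype.card_fin, nsmul_eq_mul, mul_assoc]

theorem lintegral_L3_le {κp : ℝ} {aplus aminus : (Fin d → ℝ) → ℝ} {c : ℝ≥0∞}
    (hdom : ∀ x, ‖κp‖ₑ * ‖aplus x‖ₑ ≤ c * ‖aminus x‖ₑ) (ham_meas : Measurable aminus)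
    (hG : Measurable (G (n + 1))) :
    ∫⁻ x, ‖L3 d κp aplus G n x‖ₑ
      ≤ c * ∫⁻ z, (∑ j : Fin n, ‖aminus (z (Fin.last n) - z j.castSucc)‖ₑ) *
          ‖G (n + 1) z‖ₑ := by
  have hsnoc := measurable_snoc (E := Fin d → ℝ) (n := n)
  have hmeas : ∀ j : Fin n, Measurable fun p : (Fin n → Fin d → ℝ) × (Fin d → ℝ) =>
      ‖aminus (p.2 - p.1 j)‖ₑ * ‖G (n + 1) (Fin.snoc p.1 p.2)‖ₑ := fun j => by fun_prop
  have hpt : ∀ x, ‖L3 d κp aplus G n x‖ₑ ≤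
      c * ∑ j, ∫⁻ y, ‖aminus (y - x j)‖ₑ * ‖G (n + 1) (Fin.snoc x y)‖ₑ := fun x => by
    refine (enorm_mul_sum_integral_le _ κp _).trans ?_
    simp only [enorm_mul]
    rw [Finset.mul_sum, Finset.mul_sum]
    refine Finset.sum_le_sum fun j _ => ?_
    rw [← lintegral_const_mul' _ _ enorm_ne_top, ← lintegral_const_mul _ (by fun_prop)]
    refine lintegral_mono fun y => ?_
    rw [← mul_assoc, ← mul_assoc]
    gcongr ?_ * _
    exact hdom _
  calc ∫⁻ x, ‖L3 d κp aplus G n x‖ₑ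
      ≤ ∫⁻ x, c * ∑ j, ∫⁻ y, ‖aminus (y - x j)‖ₑ * ‖G (n + 1) (Fin.snoc x y)‖ₑ :=
        lintegral_mono hpt
    _ = c * ∫⁻ z, (∑ j : Fin n, ‖aminus (z (Fin.last n) - z j.castSucc)‖ₑ) *
          ‖G (n + 1) z‖ₑ := by
        rw [lintegral_const_mul _ (by fun_prop),
          lintegral_finsetSum _ fun j _ => (hmeas j).lintegral_prod_right']
        simp_rw [Finset.sum_mul]
        rw [lintegral_finsetSum _ fun j _ => by fun_prop]
        refine congrArg _ (Finset.sum_congr rfl fun j _ => ?_)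
        rw [← lintegral_lintegral_snoc (by fun_prop)]
        simp only [Fin.snoc_last, Fin.snoc_castSucc]

theorem measurable_L1 (κm : ℝ) {a : (Fin d → ℝ) → ℝ} (ha_meas : Measurable a)
    (hG : ∀ n, Measurable (G n)) (n : ℕ) : Measurable (L1 d κm a G n) := by
  rcases n with _ | n
  · exact measurable_const
  · simp_rw [funext (L1_succ (G := G) κm a)]
    have hGn := hG n
    fun_prop

theorem measurable_L2 (κp : ℝ) {a : (Fin d → ℝ) → ℝ} (ha_meas : Measurable a)
    (hG : Measurable (G n)) : Measurable (L2 d κp a G n) := by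
  refine (Finset.measurable_sum _ fun j _ => ?_).const_mul κp
  have hupdate := measurable_update' (a := j) (X := fun _ => Fin d → ℝ)
  have hmeas : Measurable fun p : (Fin n → Fin d → ℝ) × (Fin d → ℝ) =>
      a (p.2 - p.1 j) * G n (Function.update p.1 j p.2) := by fun_prop
  exact hmeas.stronglyMeasurable.integral_prod_right'.measurable

end Operators

section Norm

variable {d : ℕ} {C : ℝ}

noncomputable def weightLC (C : ℝ) (n : ℕ) : ℝ≥0∞ := ENNReal.ofReal (C ^ n / n.factorial)

theorem normLC_eq_tsum (F : (n : ℕ) → (Fin n → (Fin d → ℝ)) → ℝ) :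
    normLC d C F = ∑' n, weightLC C n * ∫⁻ x, ‖F n x‖ₑ := by
  simp only [normLC, weightLC, Real.enorm_eq_ofReal_abs]

theorem normLC_add_le {F H : (n : ℕ) → (Fin n → (Fin d → ℝ)) → ℝ}
    (hF : ∀ n, Measurable (F n)) :
    normLC d C (fun n x => F n x + H n x) ≤ normLC d C F + normLC d C H := by
  simp only [normLC_eq_tsum, ← ENNReal.tsum_add, ← mul_add]
  refine ENNReal.tsum_le_tsum fun n => ?_
  gcongr
  exact (lintegral_mono fun x => enorm_add_le _ _).trans_eq (lintegral_add_left (hF n).enorm _)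

theorem weightLC_succ_mul (hC : 0 ≤ C) (n : ℕ) :
    weightLC C (n + 1) * (n + 1) = ENNReal.ofReal C * weightLC C n := by
  rw [weightLC, weightLC, ← ENNReal.ofReal_natCast, ← ENNReal.ofReal_one,
    ← ENNReal.ofReal_add (by positivity) zero_le_one, ← ENNReal.ofReal_mul (by positivity),
    ← ENNReal.ofReal_mul hC, Nat.factorial_succ]
  congr 1
  push_cast
  field_simp
  ring

variable {m κm : ℝ} {aminus : (Fin d → ℝ) → ℝ} {G : (n : ℕ) → (Fin n → (Fin d → ℝ)) → ℝ}
  {n : ℕ}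

theorem normLC_L1_le (hC : 0 ≤ C) (hm : 0 < m) (hκm : 0 ≤ κm) (ham : ∀ x, 0 ≤ aminus x)
    (ham_meas : Measurable aminus) (ham1 : ∀ y, ∫⁻ t, ‖aminus (y - t)‖ₑ = 1)
    (hG : ∀ n, Measurable (G n)) :
    normLC d C (L1 d κm aminus G)
      ≤ ENNReal.ofReal (κm * C / m) * normLC d C (L0 d m κm aminus G) := by
  have hconst : ENNReal.ofReal (κm * C / m) * ENNReal.ofReal m
      = ‖κm‖ₑ * ENNReal.ofReal C := by
    rw [← ENNReal.ofReal_mul (by positivity), div_mul_cancel₀ _ hm.ne', ENNReal.ofReal_mul hκm,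
      Real.enorm_eq_ofReal hκm]
  rw [normLC_eq_tsum, normLC_eq_tsum, tsum_eq_zero_add' ENNReal.summable,
    ← ENNReal.tsum_mul_left]
  simp only [L1, enorm_zero, lintegral_zero, mul_zero, zero_add]
  refine ENNReal.tsum_le_tsum fun n => ?_
  calc weightLC C (n + 1) * ∫⁻ x, ‖L1 d κm aminus G (n + 1) x‖ₑ
      ≤ weightLC C (n + 1) * (‖κm‖ₑ * ((n + 1) * n) * ∫⁻ x, ‖G n x‖ₑ) := by
        gcongr
        exact lintegral_L1_succ_le κm ham_meas ham1 (hG n)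
    _ = ‖κm‖ₑ * (ENNReal.ofReal C * weightLC C n) * (n * ∫⁻ x, ‖G n x‖ₑ) := by
        rw [← weightLC_succ_mul hC]
        ring
    _ = ENNReal.ofReal (κm * C / m) * ENNReal.ofReal m *
          (weightLC C n * (n * ∫⁻ x, ‖G n x‖ₑ)) := by
        rw [hconst]
        ring
    _ ≤ ENNReal.ofReal (κm * C / m) * (weightLC C n * ∫⁻ x, ‖L0 d m κm aminus G n x‖ₑ) := by
        rw [mul_assoc, mul_left_comm (ENNReal.ofReal m), ← mul_assoc (ENNReal.ofReal m)]
        gcongr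
        exact mul_lintegral_le_lintegral_L0 hm.le hκm ham n

theorem normLC_L2_le {κp : ℝ} {aplus : (Fin d → ℝ) → ℝ} (hm : 0 < m) (hκm : 0 ≤ κm)
    (hκp : 0 ≤ κp) (ham : ∀ x, 0 ≤ aminus x) (hap_meas : Measurable aplus)
    (hap1 : ∀ y, ∫⁻ t, ‖aplus (y - t)‖ₑ = 1) (hG : ∀ n, Measurable (G n)) :
    normLC d C (L2 d κp aplus G)
      ≤ ENNReal.ofReal (κp / m) * normLC d C (L0 d m κm aminus G) := by
  have hconst : ENNReal.ofReal (κp / m) * ENNReal.ofReal m = ‖κp‖ₑ := by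
    rw [← ENNReal.ofReal_mul (by positivity), div_mul_cancel₀ _ hm.ne', Real.enorm_eq_ofReal hκp]
  rw [normLC_eq_tsum, normLC_eq_tsum, ← ENNReal.tsum_mul_left]
  refine ENNReal.tsum_le_tsum fun n => ?_
  calc weightLC C n * ∫⁻ x, ‖L2 d κp aplus G n x‖ₑ
      ≤ weightLC C n * (‖κp‖ₑ * n * ∫⁻ x, ‖G n x‖ₑ) := by
        gcongr
        exact lintegral_L2_le κp hap_meas hap1 (hG n)
    _ = ENNReal.ofReal (κp / m) * (weightLC C n * (ENNReal.ofReal m * n * ∫⁻ x, ‖G n x‖ₑ)) := by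
        rw [← hconst]
        ring
    _ ≤ ENNReal.ofReal (κp / m) * (weightLC C n * ∫⁻ x, ‖L0 d m κm aminus G n x‖ₑ) := by
        gcongr
        exact mul_lintegral_le_lintegral_L0 hm.le hκm ham n

theorem weightLC_mul_lintegral_L3_le {κp : ℝ} {aplus : (Fin d → ℝ) → ℝ} (hC : 0 ≤ C)
    (hm : 0 ≤ m) (hκm : 0 ≤ κm) (hκp : 0 ≤ κp) (ham : ∀ x, 0 ≤ aminus x)
    (hap : ∀ x, 0 ≤ aplus x) (ham_meas : Measurable aminus)
    (hker : ∀ x, 2 * κp * aplus x ≤ C * κm * aminus x) (hG : Measurable (G (n + 1)))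
    (hsymm : ∀ (σ : Equiv.Perm (Fin (n + 1))) x, G (n + 1) (x ∘ σ) = G (n + 1) x) :
    weightLC C n * ∫⁻ x, ‖L3 d κp aplus G n x‖ₑ
      ≤ ENNReal.ofReal (1 / 2) *
          (weightLC C (n + 1) * ∫⁻ x, ‖L0 d m κm aminus G (n + 1) x‖ₑ) := by
  have hdom (x) : ‖κp‖ₑ * ‖aplus x‖ₑ ≤ ENNReal.ofReal (C * κm / 2) * ‖aminus x‖ₑ := by
    rw [Real.enorm_eq_ofReal hκp, Real.enorm_eq_ofReal (hap x), Real.enorm_eq_ofReal (ham x),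
      ← ENNReal.ofReal_mul hκp, ← ENNReal.ofReal_mul (by positivity)]
    exact ENNReal.ofReal_le_ofReal (by linarith [hker x])
  have hconst : ENNReal.ofReal (C * κm / 2)
      = ENNReal.ofReal (1 / 2) * ENNReal.ofReal κm * ENNReal.ofReal C := by
    rw [← ENNReal.ofReal_mul (by norm_num), ← ENNReal.ofReal_mul (by positivity)]
    ring_nf
  set R := ∫⁻ z, (∑ j : Fin n, ‖aminus (z (Fin.last n) - z j.castSucc)‖ₑ) * ‖G (n + 1) z‖ₑ
  calc weightLC C n * ∫⁻ x, ‖L3 d κp aplus G n x‖ₑ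
      ≤ weightLC C n * (ENNReal.ofReal (C * κm / 2) * R) := by
        gcongr
        exact lintegral_L3_le hdom ham_meas hG
    _ = ENNReal.ofReal (1 / 2) * ENNReal.ofReal κm *
          (ENNReal.ofReal C * weightLC C n) * R := by
        rw [hconst]
        ring
    _ = ENNReal.ofReal (1 / 2) *
          (weightLC C (n + 1) * (ENNReal.ofReal κm * ((n + 1) * R))) := by
        rw [← weightLC_succ_mul hC]
        ring
    _ ≤ _ := by
        gcongr
        exact mul_lintegral_lastRow_le_lintegral_L0 hm hκm ham ham_meas hG hsymm

theorem normLC_L3_le {κp : ℝ} {aplus : (Fin d → ℝ) → ℝ} (hC : 0 ≤ C) (hm : 0 ≤ m)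
    (hκm : 0 ≤ κm) (hκp : 0 ≤ κp) (ham : ∀ x, 0 ≤ aminus x) (hap : ∀ x, 0 ≤ aplus x)
    (ham_meas : Measurable aminus) (hker : ∀ x, 2 * κp * aplus x ≤ C * κm * aminus x)
    (hG : ∀ n, Measurable (G n)) (hsymm : IsSymmSeq d G) :
    normLC d C (L3 d κp aplus G)
      ≤ ENNReal.ofReal (1 / 2) * normLC d C (L0 d m κm aminus G) := by
  rw [normLC_eq_tsum, normLC_eq_tsum, ← ENNReal.tsum_mul_left]
  refine (ENNReal.tsum_le_tsum fun n => weightLC_mul_lintegral_L3_le hC hm hκm hκp ham hap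
    ham_meas hker (hG (n + 1)) (hsymm (n + 1))).trans ?_
  rw [ENNReal.tsum_mul_left, ENNReal.tsum_mul_left]
  gcongr _ * ?_
  exact ENNReal.tsum_comp_le_tsum_of_injective (add_left_injective 1)
    (fun n => weightLC C n * ∫⁻ x, ‖L0 d m κm aminus G n x‖ₑ)

end Norm

theorem stmt9_general (d : ℕ)
    (aminus aplus : (Fin d → ℝ) → ℝ)
    (ham_nonneg : ∀ x, 0 ≤ aminus x)
    (ham_meas : Measurable aminus) (ham_int : Integrable aminus)
    (ham_norm : ∫ x, aminus x = 1)
    (hap_nonneg : ∀ x, 0 ≤ aplus x)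
    (hap_meas : Measurable aplus) (hap_int : Integrable aplus)
    (hap_norm : ∫ x, aplus x = 1)
    (m κm κp C : ℝ) (hm : 0 < m) (hκm : 0 < κm) (hκp : 0 < κp) (hC : 0 < C)
    (hker : ∀ x : Fin d → ℝ, 2 * κp * aplus x ≤ C * κm * aminus x)
    (hmbig : 2 * (κm * C + κp) < m)
    (G : (n : ℕ) → (Fin n → (Fin d → ℝ)) → ℝ) (hGmeas : ∀ n, Measurable (G n))
    (hGsymm : IsSymmSeq d G) :
    normLC d C (fun n x =>
        L1 d κm aminus G n x + L2 d κp aplus G n x + L3 d κp aplus G n x)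
        ≤ ENNReal.ofReal (κm * C / m + κp / m + 1 / 2) *
          normLC d C (L0 d m κm aminus G) ∧
      κm * C / m + κp / m + 1 / 2 < 1 := by
  have ham1 := lintegral_enorm_sub_left_eq_one ham_nonneg ham_int ham_norm
  have hap1 := lintegral_enorm_sub_left_eq_one hap_nonneg hap_int hap_norm
  refine ⟨?_, by rw [← add_div, div_add' _ _ _ hm.ne', div_lt_one hm]; linarith⟩
  calc normLC d C (fun n x => L1 d κm aminus G n x + L2 d κp aplus G n x + L3 d κp aplus G n x)
      ≤ normLC d C (L1 d κm aminus G) + normLC d C (L2 d κp aplus G) +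
          normLC d C (L3 d κp aplus G) := by
        refine (normLC_add_le fun n => ?_).trans (add_le_add_left (normLC_add_le ?_) _)
        · exact (measurable_L1 κm ham_meas hGmeas n).add (measurable_L2 κp hap_meas (hGmeas n))
        · exact measurable_L1 κm ham_meas hGmeas
    _ ≤ ENNReal.ofReal (κm * C / m) * normLC d C (L0 d m κm aminus G) +
          ENNReal.ofReal (κp / m) * normLC d C (L0 d m κm aminus G) +
          ENNReal.ofReal (1 / 2) * normLC d C (L0 d m κm aminus G) := by
        gcongr
        · exact normLC_L1_le hC.le hm hκm.le ham_nonneg ham_meas ham1 hGmeas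
        · exact normLC_L2_le hm hκm.le hκp.le ham_nonneg hap_meas hap1 hGmeas
        · exact normLC_L3_le hC.le hm.le hκm.le hκp.le ham_nonneg hap_nonneg ham_meas hker
            hGmeas hGsymm
    _ = _ := by
        rw [ENNReal.ofReal_add (by positivity) (by positivity),
          ENNReal.ofReal_add (by positivity) (by positivity), add_mul, add_mul]

/-- The key relative bound in the proof of Theorem 4.6: if `Cκ⁻a⁻ ≥ 2κ⁺a⁺` and
`m > 2(κ⁻C + κ⁺)`, then `‖(L₁+L₂+L₃)G‖_C ≤ a‖L₀G‖_C` with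
`a = κ⁻C/m + κ⁺/m + 1/2 < 1`. -/
theorem stmt9 (d : ℕ) (hd : 1 ≤ d)
    (aminus aplus : (Fin d → ℝ) → ℝ)
    (ham_nonneg : ∀ x, 0 ≤ aminus x) (ham_even : ∀ x, aminus (-x) = aminus x)
    (ham_meas : Measurable aminus) (ham_int : Integrable aminus)
    (ham_norm : ∫ x, aminus x = 1)
    (hap_nonneg : ∀ x, 0 ≤ aplus x) (hap_even : ∀ x, aplus (-x) = aplus x)
    (hap_meas : Measurable aplus) (hap_int : Integrable aplus)
    (hap_norm : ∫ x, aplus x = 1)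
    (m κm κp C : ℝ) (hm : 0 < m) (hκm : 0 < κm) (hκp : 0 < κp) (hC : 0 < C)
    (hker : ∀ x : Fin d → ℝ, 2 * κp * aplus x ≤ C * κm * aminus x)
    (hmbig : 2 * (κm * C + κp) < m)
    (G : (n : ℕ) → (Fin n → (Fin d → ℝ)) → ℝ) (hGmeas : ∀ n, Measurable (G n))
    (hGsymm : IsSymmSeq d G)
    (hG : normLC d C (L0 d m κm aminus G) < ⊤) :
    normLC d C (fun n x =>
        L1 d κm aminus G n x + L2 d κp aplus G n x + L3 d κp aplus G n x)
        ≤ ENNReal.ofReal (κm * C / m + κp / m + 1 / 2) *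
          normLC d C (L0 d m κm aminus G) ∧
      κm * C / m + κp / m + 1 / 2 < 1 :=
  stmt9_general d aminus aplus ham_nonneg ham_meas ham_int ham_norm hap_nonneg hap_meas hap_int
    hap_norm m κm κp C hm hκm hκp hC hker hmbig G hGmeas hGsymm
end
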